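/- arXiv:2402.12572 — 3 statements merged into one kernel-verified Lean document; each statement's English description precedes it below -/
import Mathlib

section
/- Let f : ℝⁿ → Y be a function, x* ∈ ℝⁿ, and let t be a nonempty finite index set with, for each i ∈ t, a vector aᵢ ∈ ℝⁿ with aᵢ ≠ 0 and a scalar bᵢ ∈ ℝ. Suppose the set B = {x ∈ ℝⁿ : f(x) ≠ f(x*)} is nonempty and contained in the union over i ∈ t of the hyperplanes Hᵢ = {x : ⟪aᵢ, x⟫ = bᵢ}. Then min over i ∈ t of |⟪aᵢ, x*⟫ − bᵢ| / ‖aᵢ‖ ≤ infDist(x*, B); that is, the minimum projection distance is a lower bound on the pointwise ℓ₂ robustness radius of f at x*. -/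
open scoped RealInnerProductSpace

theorem abs_inner_sub_div_norm_le_dist {E : Type*} [NormedAddCommGroup E]
    [InnerProductSpace ℝ E] {a x y : E} {b : ℝ} (hy : ⟪a, y⟫ = b) :
    |⟪a, x⟫ - b| / ‖a‖ ≤ dist x y := by
  refine div_le_of_le_mul₀ (norm_nonneg a) dist_nonneg ?_
  calc |⟪a, x⟫ - b| = |⟪a, x - y⟫| := by rw [inner_sub_right, hy]
    _ ≤ ‖a‖ * ‖x - y‖ := abs_real_inner_le_norm a (x - y)
    _ = dist x y * ‖a‖ := by rw [dist_eq_norm, mul_comm]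

theorem min_projDist_le_infDist_general {n : ℕ} {Y : Type*} {ι : Type*}
    (f : EuclideanSpace ℝ (Fin n) → Y) (xs : EuclideanSpace ℝ (Fin n))
    (t : Finset ι) (ht : t.Nonempty)
    (a : ι → EuclideanSpace ℝ (Fin n)) (b : ι → ℝ)
    (hBne : {x : EuclideanSpace ℝ (Fin n) | f x ≠ f xs}.Nonempty)
    (hcover : {x : EuclideanSpace ℝ (Fin n) | f x ≠ f xs} ⊆
      ⋃ i ∈ t, {x : EuclideanSpace ℝ (Fin n) | ⟪a i, x⟫ = b i}) :
    t.inf' ht (fun i => |⟪a i, xs⟫ - b i| / ‖a i‖) ≤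
      Metric.infDist xs {x : EuclideanSpace ℝ (Fin n) | f x ≠ f xs} := by
  refine (Metric.le_infDist hBne).mpr fun y hy => ?_
  obtain ⟨i, hi, hyi⟩ : ∃ i ∈ t, ⟪a i, y⟫ = b i := by simpa using hcover hy
  exact (t.inf'_le _ hi).trans (abs_inner_sub_div_norm_le_dist hyi)

/-- If the nonempty set `B` of points classified differently from `x*` is contained in a
finite union of hyperplanes `{x : ⟪aᵢ, x⟫ = bᵢ}` (with nonzero normals), then the minimum
projection distance of `x*` to these hyperplanes is a lower bound on `infDist x* B`,
i.e. on the pointwise ℓ₂ robustness radius of `f` at `x*`. -/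
theorem min_projDist_le_infDist {n : ℕ} {Y : Type*} {ι : Type*}
    (f : EuclideanSpace ℝ (Fin n) → Y) (xs : EuclideanSpace ℝ (Fin n))
    (t : Finset ι) (ht : t.Nonempty)
    (a : ι → EuclideanSpace ℝ (Fin n)) (b : ι → ℝ)
    (ha : ∀ i ∈ t, a i ≠ 0)
    (hBne : {x : EuclideanSpace ℝ (Fin n) | f x ≠ f xs}.Nonempty)
    (hcover : {x : EuclideanSpace ℝ (Fin n) | f x ≠ f xs} ⊆
      ⋃ i ∈ t, {x : EuclideanSpace ℝ (Fin n) | ⟪a i, x⟫ = b i}) :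
    t.inf' ht (fun i => |⟪a i, xs⟫ - b i| / ‖a i‖) ≤
      Metric.infDist xs {x : EuclideanSpace ℝ (Fin n) | f x ≠ f xs} :=
  min_projDist_le_infDist_general f xs t ht a b hBne hcover
end

section
/- Let f : ℝᵐ × ℝᵏ → Y be a classifier, x* = (u*, v*) a data point, and D ⊆ ℝᵏ a nonempty finite set of sensitive values with v* ∈ D such that f(u*, v) = f(u*, v*) for all v ∈ D. For each v ∈ D assume there exists u with f(u, v) ≠ f(u*, v), and let ε_v = sSup {ε ∈ ℝ : ε ≥ 0 ∧ ∀ u, ‖u − u*‖₂ ≤ ε → f(u, v) = f(u*, v)} be the robustness radius of the slice u ↦ f(u, v) at u*. Then the local individual fairness parameter sSup {ε ∈ ℝ : ε ≥ 0 ∧ ∀ u, ∀ v ∈ D, ‖u − u*‖₂ ≤ ε → f(u, v) = f(u*, v*)} equals the minimum over v ∈ D of ε_v. -/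
/-!
A radius `ε ≥ 0` certifies fairness exactly when it certifies robustness of every slice
`u ↦ f (u, v)`, `v ∈ D` (the slices agree at `u*` because `f (u*, ·)` is constant on `D`).
So the set of fairness radii is the intersection of the sets of slice radii, and these sets
are initial segments `[0, ε_v)` or `[0, ε_v]` of `[0, ∞)`; the supremum of a finite
intersection of such segments is the least of their suprema.
-/

open Finset

/-- `sSup (stableRadii P x)` is the robustness radius of `P` at `x`; note that `sSup` on `ℝ`
returns `0` unless `P` fails somewhere. -/
def stableRadii {U : Type*} [PseudoMetricSpace U] (P : U → Prop) (x : U) : Set ℝ :=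
  {ε | 0 ≤ ε ∧ ∀ u, dist u x ≤ ε → P u}

section StableRadii

variable {U : Type*} {P : U → Prop} {x : U}

section Pseudo

variable [PseudoMetricSpace U]

theorem mem_stableRadii_of_le {δ ε : ℝ} (hε : ε ∈ stableRadii P x) (hδ : 0 ≤ δ) (hle : δ ≤ ε) :
    δ ∈ stableRadii P x :=
  ⟨hδ, fun u hu => hε.2 u (hu.trans hle)⟩

theorem bddAbove_stableRadii (h : ∃ u, ¬ P u) : BddAbove (stableRadii P x) := by
  obtain ⟨u, hu⟩ := h
  exact ⟨dist u x, fun ε hε => le_of_not_gt fun hlt => hu (hε.2 u hlt.le)⟩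

theorem mem_stableRadii_forall_iff {ι : Type*} {D : Set ι} {Q : ι → U → Prop} {ε : ℝ}
    (hε : 0 ≤ ε) :
    ε ∈ stableRadii (fun u => ∀ i ∈ D, Q i u) x ↔ ∀ i ∈ D, ε ∈ stableRadii (Q i) x :=
  ⟨fun h i hi => ⟨hε, fun u hu => h.2 u hu i hi⟩,
    fun h => ⟨hε, fun u hu i hi => (h i hi).2 u hu⟩⟩

end Pseudo

variable [MetricSpace U]

theorem zero_mem_stableRadii (h : P x) : (0 : ℝ) ∈ stableRadii P x :=
  ⟨le_rfl, fun u hu => by rwa [dist_le_zero.mp hu]⟩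

theorem mem_stableRadii_of_lt_sSup (hx : P x) {δ : ℝ} (hδ : 0 ≤ δ)
    (hlt : δ < sSup (stableRadii P x)) : δ ∈ stableRadii P x := by
  obtain ⟨ε, hε, hδε⟩ := exists_lt_of_lt_csSup ⟨0, zero_mem_stableRadii hx⟩ hlt
  exact mem_stableRadii_of_le hε hδ hδε.le

theorem sSup_stableRadii_forall_eq_inf' {ι : Type*} (D : Finset ι) (hD : D.Nonempty)
    {Q : ι → U → Prop} (hx : ∀ i ∈ D, Q i x) (hbdd : ∀ i ∈ D, ∃ u, ¬ Q i u) :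
    sSup (stableRadii (fun u => ∀ i ∈ D, Q i u) x) =
      D.inf' hD fun i => sSup (stableRadii (Q i) x) := by
  set S := stableRadii (fun u => ∀ i ∈ D, Q i u) x
  have hS0 : (0 : ℝ) ∈ S := zero_mem_stableRadii hx
  have hS_sub : ∀ i ∈ D, S ⊆ stableRadii (Q i) x := fun i hi ε hε =>
    (mem_stableRadii_forall_iff hε.1).mp hε i hi
  have ⟨i₀, hi₀⟩ := hD
  have hS_bdd : BddAbove S := (bddAbove_stableRadii (hbdd i₀ hi₀)).mono (hS_sub i₀ hi₀)
  refine le_antisymm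
    (le_inf' hD _ fun i hi => csSup_le_csSup (bddAbove_stableRadii (hbdd i hi)) ⟨0, hS0⟩
      (hS_sub i hi)) (le_of_forall_lt_imp_le_of_dense fun δ hδ => ?_)
  rcases lt_or_ge δ 0 with hneg | hnonneg
  · exact hneg.le.trans (le_csSup hS_bdd hS0)
  · refine le_csSup hS_bdd ((mem_stableRadii_forall_iff hnonneg).mpr fun i hi => ?_)
    exact mem_stableRadii_of_lt_sSup (hx i hi) hnonneg (hδ.trans_le (inf'_le _ hi))

end StableRadii

theorem fairness_param_eq_min_robustness_general {m k : ℕ} {Y : Type*}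
    (f : EuclideanSpace ℝ (Fin m) × EuclideanSpace ℝ (Fin k) → Y)
    (us : EuclideanSpace ℝ (Fin m)) (vs : EuclideanSpace ℝ (Fin k))
    (D : Finset (EuclideanSpace ℝ (Fin k))) (hD : D.Nonempty)
    (hconst : ∀ v ∈ D, f (us, v) = f (us, vs))
    (hB : ∀ v ∈ D, ∃ u : EuclideanSpace ℝ (Fin m), f (u, v) ≠ f (us, v)) :
    sSup {ε : ℝ | 0 ≤ ε ∧
        ∀ u : EuclideanSpace ℝ (Fin m), ∀ v ∈ D, ‖u - us‖ ≤ ε → f (u, v) = f (us, vs)} =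
      D.inf' hD (fun v => sSup {ε : ℝ | 0 ≤ ε ∧
        ∀ u : EuclideanSpace ℝ (Fin m), ‖u - us‖ ≤ ε → f (u, v) = f (us, v)}) := by
  have hfair : {ε : ℝ | 0 ≤ ε ∧
      ∀ u : EuclideanSpace ℝ (Fin m), ∀ v ∈ D, ‖u - us‖ ≤ ε → f (u, v) = f (us, vs)} =
      stableRadii (fun u => ∀ v ∈ D, f (u, v) = f (us, v)) us := by
    ext ε
    simp only [stableRadii, dist_eq_norm, Set.mem_ofPred_eq]
    exact and_congr_right fun _ => forall_congr' fun u =>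
      ⟨fun h hu v hv => (h v hv hu).trans (hconst v hv).symm,
        fun h v hv hu => (h hu v hv).trans (hconst v hv)⟩
  rw [hfair, sSup_stableRadii_forall_eq_inf' D hD (Q := fun v u => f (u, v) = f (us, v))
    (fun _ _ => rfl) hB]
  simp only [stableRadii, dist_eq_norm]

/-- The local individual fairness parameter of `f` at `x* = (u*, v*)` (with sensitive
values ranging over a nonempty finite set `D` on which `f(u*, ·)` is constant) equals the
minimum over `v ∈ D` of the robustness radii of the slices `u ↦ f(u, v)` at `u*`. -/
theorem fairness_param_eq_min_robustness {m k : ℕ} {Y : Type*}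
    (f : EuclideanSpace ℝ (Fin m) × EuclideanSpace ℝ (Fin k) → Y)
    (us : EuclideanSpace ℝ (Fin m)) (vs : EuclideanSpace ℝ (Fin k))
    (D : Finset (EuclideanSpace ℝ (Fin k))) (hD : D.Nonempty) (hvs : vs ∈ D)
    (hconst : ∀ v ∈ D, f (us, v) = f (us, vs))
    (hB : ∀ v ∈ D, ∃ u : EuclideanSpace ℝ (Fin m), f (u, v) ≠ f (us, v)) :
    sSup {ε : ℝ | 0 ≤ ε ∧
        ∀ u : EuclideanSpace ℝ (Fin m), ∀ v ∈ D, ‖u - us‖ ≤ ε → f (u, v) = f (us, vs)} =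
      D.inf' hD (fun v => sSup {ε : ℝ | 0 ≤ ε ∧
        ∀ u : EuclideanSpace ℝ (Fin m), ‖u - us‖ ≤ ε → f (u, v) = f (us, v)}) :=
  fairness_param_eq_min_robustness_general f us vs D hD hconst hB
end

section
/- Let f : ℝᵐ × ℝᵏ → Y be a classifier, x* = (u*, v*) a data point, and D ⊆ ℝᵏ a nonempty finite set of sensitive values with v* ∈ D such that f(u*, v) = f(u*, v*) for all v ∈ D. Suppose for each v ∈ D there is a nonempty finite family of pairs (a_{v,i}, b_{v,i}) with a_{v,i} ∈ ℝᵐ nonzero and b_{v,i} ∈ ℝ, such that {u ∈ ℝᵐ : f(u, v) ≠ f(u*, v)} is contained in the union over i of the hyperplanes {u : ⟪a_{v,i}, u⟫ = b_{v,i}}. Let ε_LB be the minimum over all v ∈ D and all i of |⟪a_{v,i}, u*⟫ − b_{v,i}| / ‖a_{v,i}‖. Then for every u ∈ ℝᵐ and v ∈ D with ‖u − u*‖₂ < ε_LB, one has f(u, v) = f(u*, v*); that is, f is ε-individually fair at x* for every ε < ε_LB. -/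
open scoped RealInnerProductSpace

/-!
A point `u` with `‖u - u*‖ < ε_LB` cannot lie on any boundary hyperplane `⟪a, ·⟫ = b` of the
slice `f(·, v)`: by Cauchy–Schwarz, `|⟪a, u*⟫ - b| = |⟪a, u* - u⟫| ≤ ‖a‖ ‖u - u*‖` for every
point `u` of that hyperplane. So `f(u, v) = f(u*, v)`, which equals `f(u*, v*)` by hypothesis.
-/

section Hyperplane

variable {E : Type*} [NormedAddCommGroup E] [InnerProductSpace ℝ E]

-- For `a = 0` the left-hand side is the junk value `x / 0 = 0`.
theorem abs_inner_sub_div_norm_le_norm_sub {a x y : E} {b : ℝ} (hy : ⟪a, y⟫ = b) :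
    |⟪a, x⟫ - b| / ‖a‖ ≤ ‖y - x‖ := by
  refine div_le_of_le_mul₀ (norm_nonneg a) (norm_nonneg _) ?_
  calc |⟪a, x⟫ - b| = |⟪a, x - y⟫| := by rw [inner_sub_right, hy]
    _ ≤ ‖a‖ * ‖x - y‖ := abs_real_inner_le_norm a (x - y)
    _ = ‖y - x‖ * ‖a‖ := by rw [norm_sub_rev, mul_comm]

theorem eq_of_norm_sub_lt_sInf_hyperplane_dist {Y ι : Type*} {g : E → Y} {x y : E}
    {s : Finset ι} {a : ι → E} {b : ι → ℝ}
    (hcover : {z | g z ≠ g x} ⊆ ⋃ i ∈ s, {z | ⟪a i, z⟫ = b i})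
    (hy : ‖y - x‖ < sInf ((fun i => |⟪a i, x⟫ - b i| / ‖a i‖) '' (s : Set ι))) :
    g y = g x := by
  by_contra hne
  obtain ⟨i, hi, hyi⟩ : ∃ i ∈ s, ⟪a i, y⟫ = b i := by simpa using hcover hne
  have hinf_le : sInf ((fun i => |⟪a i, x⟫ - b i| / ‖a i‖) '' (s : Set ι)) ≤
      |⟪a i, x⟫ - b i| / ‖a i‖ :=
    csInf_le ((s : Set ι).toFinite.image _).bddBelow ⟨i, hi, rfl⟩
  exact (hy.trans_le hinf_le).not_ge (abs_inner_sub_div_norm_le_norm_sub hyi)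

end Hyperplane

theorem fairness_lower_bound_via_projections_general {m k : ℕ} {Y : Type*} {ι : Type*}
    (f : EuclideanSpace ℝ (Fin m) × EuclideanSpace ℝ (Fin k) → Y)
    (us : EuclideanSpace ℝ (Fin m)) (vs : EuclideanSpace ℝ (Fin k))
    (D : Finset (EuclideanSpace ℝ (Fin k))) (hD : D.Nonempty)
    (hconst : ∀ v ∈ D, f (us, v) = f (us, vs))
    (s : EuclideanSpace ℝ (Fin k) → Finset ι)
    (a : EuclideanSpace ℝ (Fin k) → ι → EuclideanSpace ℝ (Fin m))
    (b : EuclideanSpace ℝ (Fin k) → ι → ℝ)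
    (hcover : ∀ v ∈ D, {u : EuclideanSpace ℝ (Fin m) | f (u, v) ≠ f (us, v)} ⊆
      ⋃ i ∈ s v, {u : EuclideanSpace ℝ (Fin m) | ⟪a v i, u⟫ = b v i}) :
    ∀ u : EuclideanSpace ℝ (Fin m), ∀ v ∈ D,
      ‖u - us‖ < D.inf' hD
        (fun w => sInf ((fun i => |⟪a w i, us⟫ - b w i| / ‖a w i‖) '' (s w : Set ι))) →
      f (u, v) = f (us, vs) := by
  intro u v hv hu
  rw [← hconst v hv]
  exact eq_of_norm_sub_lt_sInf_hyperplane_dist (g := fun u => f (u, v)) (hcover v hv)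
    (hu.trans_le (Finset.inf'_le _ hv))

/-- The certificate `ε_LB` produced by the certification algorithm — the minimum, over all
sensitive values `v ∈ D` and all boundary hyperplanes of the slice `u ↦ f(u, v)`, of the
projection distance from `u*` — is a lower bound on the individual fairness parameter:
`f` is individually fair at `x* = (u*, v*)` for every radius below `ε_LB`. -/
theorem fairness_lower_bound_via_projections {m k : ℕ} {Y : Type*} {ι : Type*}
    (f : EuclideanSpace ℝ (Fin m) × EuclideanSpace ℝ (Fin k) → Y)
    (us : EuclideanSpace ℝ (Fin m)) (vs : EuclideanSpace ℝ (Fin k))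
    (D : Finset (EuclideanSpace ℝ (Fin k))) (hD : D.Nonempty) (hvs : vs ∈ D)
    (hconst : ∀ v ∈ D, f (us, v) = f (us, vs))
    (s : EuclideanSpace ℝ (Fin k) → Finset ι)
    (a : EuclideanSpace ℝ (Fin k) → ι → EuclideanSpace ℝ (Fin m))
    (b : EuclideanSpace ℝ (Fin k) → ι → ℝ)
    (hsne : ∀ v ∈ D, (s v).Nonempty)
    (ha : ∀ v ∈ D, ∀ i ∈ s v, a v i ≠ 0)
    (hcover : ∀ v ∈ D, {u : EuclideanSpace ℝ (Fin m) | f (u, v) ≠ f (us, v)} ⊆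
      ⋃ i ∈ s v, {u : EuclideanSpace ℝ (Fin m) | ⟪a v i, u⟫ = b v i}) :
    ∀ u : EuclideanSpace ℝ (Fin m), ∀ v ∈ D,
      ‖u - us‖ < D.inf' hD
        (fun w => sInf ((fun i => |⟪a w i, us⟫ - b w i| / ‖a w i‖) '' (s w : Set ι))) →
      f (u, v) = f (us, vs) :=
  fairness_lower_bound_via_projections_general f us vs D hD hconst s a b hcover
end
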